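/- Let G be a group and k a commutative ring. The strictly autopoietic cochains AP(k[G]^{⊗*}) form a subcomplex of the Hochschild cochain complex (Hom_k(k[G]^{⊗*}, k[G]), δ), and its cohomology is naturally isomorphic to the group cohomology H^*(G; k) (equivalently, the simplicial cohomology H^*(BG; k) of the classifying space), for G finite or infinite. -/

import Mathlib

open MonoidAlgebra

variable {k G : Type} [CommRing k] [Group G]

/-- Hochschild cochains on the group ring, modeled by values on basis tuples;
this is `Hom_k(k[G]^{⊗n}, k[G])`. -/
abbrev GCochain (k G : Type) [CommRing k] [Group G] (n : ℕ) : Type :=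
  (Fin n → G) → MonoidAlgebra k G

/-- Merge the `i`-th and `(i+1)`-st entries of a tuple. -/
def gmerge {n : ℕ} (g : Fin (n + 1) → G) (i : Fin n) : Fin n → G := fun j =>
  if (j : ℕ) < i then g j.castSucc
  else if (j : ℕ) = i then g j.castSucc * g j.succ
  else g j.succ

/-- The Hochschild coboundary
`(δf)(g_1,…,g_{n+1}) = g_1 f(g_2,…,g_{n+1}) + Σ_{i=1}^{n} (-1)^i f(g_1,…,g_i g_{i+1},…,g_{n+1})
  + (-1)^{n+1} f(g_1,…,g_n) g_{n+1}`. -/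
noncomputable def gdelta (k G : Type) [CommRing k] [Group G] (n : ℕ) :
    GCochain k G n →ₗ[k] GCochain k G (n + 1) :=
  (LinearMap.pi fun g =>
      (LinearMap.mulLeft k (single (g 0) (1 : k))).comp (LinearMap.proj (Fin.tail g)))
  + (∑ i : Fin n, ((-1 : k) ^ ((i : ℕ) + 1)) •
      LinearMap.pi fun g => LinearMap.proj (gmerge g i))
  + ((-1 : k) ^ (n + 1)) •
      LinearMap.pi fun g =>
        (LinearMap.mulRight k (single (g (Fin.last n)) (1 : k))).comp
          (LinearMap.proj (Fin.init g))

/-- The ordered product of a tuple of group elements. -/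
def gprod {n : ℕ} (g : Fin n → G) : G := (List.ofFn g).prod

/-- A cochain is (strictly) autopoietic if `f(g_1 ⊗ ⋯ ⊗ g_n) = λ_{g_1,…,g_n}·(g_1 g_2 ⋯ g_n)`
(in degree `0`, `f(1) = λ·e`). -/
def IsAP {n : ℕ} (f : GCochain k G n) : Prop :=
  ∀ g : Fin n → G, ∃ c : k, f g = c • single (gprod g) (1 : k)

/-- A cochain is non-autopoietic if the coefficient of `g_1 g_2 ⋯ g_n` in
`f(g_1 ⊗ ⋯ ⊗ g_n)` vanishes for every tuple (in degree `0`, the coefficient of `e`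
in `f(1)` vanishes). -/
def IsNP {n : ℕ} (f : GCochain k G n) : Prop :=
  ∀ g : Fin n → G, (f g).coeff (gprod g) = 0

/-- The submodule of (strictly) autopoietic cochains. -/
noncomputable def APsub (k G : Type) [CommRing k] [Group G] (n : ℕ) :
    Submodule k (GCochain k G n) where
  carrier := {f | IsAP f}
  add_mem' := by
    intro f f' hf hf' g
    obtain ⟨c, hc⟩ := hf g
    obtain ⟨c', hc'⟩ := hf' g
    exact ⟨c + c', by simp [hc, hc', add_smul]⟩
  zero_mem' := fun g => ⟨0, by simp⟩
  smul_mem' := by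
    intro c f hf g
    obtain ⟨c', hc'⟩ := hf g
    exact ⟨c * c', by simp [hc', mul_smul]⟩

/-- Simplicial cochains of the bar construction `B_*(G)`: `B^n = Hom_k(k[G^n], k)`. -/
abbrev BarCochain (k G : Type) [CommRing k] [Group G] (n : ℕ) : Type := (Fin n → G) → k

/-- The `i`-th face of the bar construction. -/
def barFace {n : ℕ} (i : ℕ) (g : Fin (n + 1) → G) : Fin n → G := fun j =>
  if (j : ℕ) + 1 < i then g j.castSucc
  else if (j : ℕ) + 1 = i then g j.castSucc * g j.succ
  else g j.succ

/-- The simplicial coboundary `d^* = Σ (-1)^i d_i^*` computing `H^*(BG; k)`. -/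
noncomputable def dstarBar (k G : Type) [CommRing k] [Group G] (n : ℕ) :
    BarCochain k G n →ₗ[k] BarCochain k G (n + 1) :=
  ∑ i ∈ Finset.range (n + 2), ((-1 : k) ^ i) •
    LinearMap.pi fun g => LinearMap.proj (barFace i g)

/-- Degree-zero cohomology of a cochain complex. -/
noncomputable abbrev cohomZero {k V₀ V₁ : Type} [CommRing k] [AddCommGroup V₀] [Module k V₀]
    [AddCommGroup V₁] [Module k V₁] (d : V₀ →ₗ[k] V₁) : Type :=
  LinearMap.ker d

/-- Cohomology of a cochain complex at an intermediate spot `V₀ → V₁ → V₂`: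
`ker d₁ / im d₀`. -/
noncomputable abbrev cohomSucc {k V₀ V₁ V₂ : Type} [CommRing k] [AddCommGroup V₀] [Module k V₀]
    [AddCommGroup V₁] [Module k V₁] [AddCommGroup V₂] [Module k V₂]
    (d₀ : V₀ →ₗ[k] V₁) (d₁ : V₁ →ₗ[k] V₂) : Type :=
  LinearMap.ker d₁ ⧸
    Submodule.comap (LinearMap.ker d₁).subtype (LinearMap.range d₀)

/-! An autopoietic cochain is determined by its coefficient function `c : Gⁿ → k`, via
`f(g₁,…,gₙ) = c(g₁,…,gₙ)·[g₁⋯gₙ]`. Since `g₁·[g₂⋯gₙ₊₁] = [g₁⋯gₙ₊₁] = [g₁⋯gₙ]·gₙ₊₁` and merging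
two adjacent entries does not change the product, every term of `δf` is again a multiple of
`[g₁⋯gₙ₊₁]`, whose coefficient is the matching face term of the bar coboundary of `c`. Hence
`c ↦ f` is an isomorphism of cochain complexes from the dual bar complex onto the autopoietic
cochains, and it induces the isomorphism in cohomology. -/

section CohomologyOfIsomorphicComplexes

variable {V₀ V₁ V₂ W₀ W₁ W₂ : Type} [AddCommGroup V₀] [Module k V₀]
  [AddCommGroup V₁] [Module k V₁] [AddCommGroup V₂] [Module k V₂]
  [AddCommGroup W₀] [Module k W₀] [AddCommGroup W₁] [Module k W₁]
  [AddCommGroup W₂] [Module k W₂]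
  {e₀ : V₀ ≃ₗ[k] W₀} {e₁ : V₁ ≃ₗ[k] W₁} {e₂ : V₂ ≃ₗ[k] W₂}
  {d₀ : V₀ →ₗ[k] V₁} {d₁ : V₁ →ₗ[k] V₂} {d₀' : W₀ →ₗ[k] W₁} {d₁' : W₁ →ₗ[k] W₂}

lemma ker_eq_map_ker_of_comm (hc : ∀ x, e₁ (d₀ x) = d₀' (e₀ x)) :
    LinearMap.ker d₀' = (LinearMap.ker d₀).map e₀.toLinearMap := by
  ext y
  rw [Submodule.mem_map_equiv, LinearMap.mem_ker, LinearMap.mem_ker, ← e₁.map_eq_zero_iff, hc,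
    e₀.apply_symm_apply]

lemma range_eq_map_range_of_comm (hc : ∀ x, e₁ (d₀ x) = d₀' (e₀ x)) :
    LinearMap.range d₀' = (LinearMap.range d₀).map e₁.toLinearMap := by
  ext y
  simp only [Submodule.mem_map_equiv, LinearMap.mem_range]
  constructor
  · rintro ⟨w, rfl⟩
    exact ⟨e₀.symm w, e₁.injective (by simp [hc])⟩
  · rintro ⟨v, hv⟩
    exact ⟨e₀ v, by rw [← hc, hv, e₁.apply_symm_apply]⟩

noncomputable def cohomZeroEquivOfComm (hc : ∀ x, e₁ (d₀ x) = d₀' (e₀ x)) :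
    cohomZero d₀ ≃ₗ[k] cohomZero d₀' :=
  e₀.ofSubmodules _ _ (ker_eq_map_ker_of_comm hc).symm

noncomputable def cohomSuccEquivOfComm (hc₀ : ∀ x, e₁ (d₀ x) = d₀' (e₀ x))
    (hc₁ : ∀ x, e₂ (d₁ x) = d₁' (e₁ x)) :
    cohomSucc d₀ d₁ ≃ₗ[k] cohomSucc d₀' d₁' :=
  Submodule.Quotient.equiv _ _ (cohomZeroEquivOfComm hc₁) <| by
    ext y
    rw [Submodule.mem_map_equiv, Submodule.mem_comap, Submodule.mem_comap,
      range_eq_map_range_of_comm hc₀, Submodule.mem_map_equiv]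
    rfl

end CohomologyOfIsomorphicComplexes

lemma gprod_eq_head_mul_gprod_tail {n : ℕ} (g : Fin (n + 1) → G) :
    gprod g = g 0 * gprod (Fin.tail g) := by
  rw [gprod, List.ofFn_succ, List.prod_cons]; rfl

lemma gprod_cons {n : ℕ} (a : G) (t : Fin n → G) : gprod (Fin.cons a t) = a * gprod t := by
  rw [gprod_eq_head_mul_gprod_tail]; simp

lemma gprod_eq_gprod_init_mul_last {n : ℕ} (g : Fin (n + 1) → G) :
    gprod g = gprod (Fin.init g) * g (Fin.last n) := by
  rw [gprod, List.ofFn_succ', List.concat_eq_append, List.prod_append, List.prod_singleton]; rfl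

lemma gmerge_zero {n : ℕ} (g : Fin (n + 2) → G) :
    gmerge g 0 = Fin.cons (g 0 * g 1) (fun j => g j.succ.succ) := by
  funext j
  cases j using Fin.cases <;> simp [gmerge]

lemma gmerge_succ {n : ℕ} (g : Fin (n + 2) → G) (i : Fin n) :
    gmerge g i.succ = Fin.cons (g 0) (gmerge (Fin.tail g) i) := by
  funext j
  cases j using Fin.cases with
  | zero => simp [gmerge]
  | succ j =>
    simp only [gmerge, Fin.cons_succ, Fin.tail, Fin.val_succ, Fin.succ_castSucc,
      Nat.add_lt_add_iff_right, Nat.add_right_cancel_iff]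

lemma gprod_gmerge {n : ℕ} (g : Fin (n + 1) → G) (i : Fin n) : gprod (gmerge g i) = gprod g := by
  induction n with
  | zero => exact i.elim0
  | succ m ih =>
    cases i using Fin.cases with
    | zero =>
      rw [gmerge_zero, gprod_cons, gprod_eq_head_mul_gprod_tail g,
        gprod_eq_head_mul_gprod_tail (Fin.tail g), ← mul_assoc]
      rfl
    | succ i => rw [gmerge_succ, gprod_cons, ih, ← gprod_eq_head_mul_gprod_tail]

lemma barFace_zero {n : ℕ} (g : Fin (n + 1) → G) : barFace 0 g = Fin.tail g := by
  funext j; simp [barFace, Fin.tail]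

lemma barFace_last {n : ℕ} (g : Fin (n + 1) → G) : barFace (n + 1) g = Fin.init g := by
  funext j; simp only [barFace, Fin.init]; rw [if_pos (by omega)]

lemma barFace_succ {n : ℕ} (g : Fin (n + 1) → G) (i : Fin n) :
    barFace ((i : ℕ) + 1) g = gmerge g i := by
  funext j
  simp only [barFace, gmerge, Nat.add_lt_add_iff_right, Nat.add_right_cancel_iff]

lemma gdelta_apply {n : ℕ} (f : GCochain k G n) (g : Fin (n + 1) → G) :
    gdelta k G n f g =
      single (g 0) (1 : k) * f (Fin.tail g)
      + ∑ i : Fin n, (-1 : k) ^ ((i : ℕ) + 1) • f (gmerge g i)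
      + (-1 : k) ^ (n + 1) • (f (Fin.init g) * single (g (Fin.last n)) (1 : k)) := by
  simp [gdelta]

lemma dstarBar_apply {n : ℕ} (c : BarCochain k G n) (g : Fin (n + 1) → G) :
    dstarBar k G n c g =
      c (Fin.tail g)
      + ∑ i : Fin n, (-1 : k) ^ ((i : ℕ) + 1) * c (gmerge g i)
      + (-1 : k) ^ (n + 1) * c (Fin.init g) := by
  have hsum : dstarBar k G n c g =
      ∑ i ∈ Finset.range (n + 2), (-1 : k) ^ i * c (barFace i g) := by
    simp [dstarBar]
  rw [hsum, Finset.sum_range_succ, Finset.sum_range_succ', barFace_zero, barFace_last, pow_zero,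
    one_mul, ← Fin.sum_univ_eq_sum_range (fun i => (-1 : k) ^ (i + 1) * c (barFace (i + 1) g))]
  simp only [barFace_succ]
  ring

noncomputable def barEquivAP (n : ℕ) : BarCochain k G n ≃ₗ[k] APsub k G n where
  toFun c := ⟨fun g => c g • single (gprod g) (1 : k), fun g => ⟨c g, rfl⟩⟩
  invFun f g := (f.1 g).coeff (gprod g)
  map_add' c c' := Subtype.ext <| funext fun g => add_smul _ _ _
  map_smul' a c := Subtype.ext <| funext fun g => mul_smul _ _ _
  left_inv c := funext fun g => by simp
  right_inv f := Subtype.ext <| funext fun g => by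
    obtain ⟨a, ha⟩ := f.2 g
    simp [ha]

lemma barEquivAP_apply {n : ℕ} (c : BarCochain k G n) (g : Fin n → G) :
    (barEquivAP n c : GCochain k G n) g = c g • single (gprod g) (1 : k) := rfl

lemma gdelta_barEquivAP {n : ℕ} (c : BarCochain k G n) :
    gdelta k G n (barEquivAP n c) = barEquivAP (n + 1) (dstarBar k G n c) := by
  funext g
  simp only [gdelta_apply, dstarBar_apply, barEquivAP_apply, add_smul, Finset.sum_smul,
    smul_smul, mul_smul_comm, smul_mul_assoc, single_mul_single, mul_one,
    gprod_gmerge, ← gprod_eq_head_mul_gprod_tail, ← gprod_eq_gprod_init_mul_last]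

lemma gdelta_mem_APsub {n : ℕ} {f : GCochain k G n} (hf : f ∈ APsub k G n) :
    gdelta k G n f ∈ APsub k G (n + 1) := by
  obtain ⟨c, hc⟩ := (barEquivAP n).surjective ⟨f, hf⟩
  rw [show f = barEquivAP n c by rw [hc], gdelta_barEquivAP]
  exact Subtype.prop _

lemma restrict_gdelta_barEquivAP (n : ℕ) (c : BarCochain k G n) :
    barEquivAP (n + 1) (dstarBar k G n c) =
      (gdelta k G n).restrict (fun _ => gdelta_mem_APsub) (barEquivAP n c) :=
  Subtype.ext (gdelta_barEquivAP c).symm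

/-- The strictly autopoietic cochains form a subcomplex of the Hochschild
cochain complex `(Hom_k(k[G]^{⊗*}, k[G]), δ)`, and the cohomology of this subcomplex is
isomorphic, as a `k`-module in each degree, to the group cohomology `H^*(BG; k)`, i.e. the
cohomology of the `Hom_k`-dual of the bar complex of `G`, for `G` finite or infinite. -/
theorem stmt_4 :
    ∃ h : ∀ (n : ℕ) (f : GCochain k G n), f ∈ APsub k G n → gdelta k G n f ∈ APsub k G (n + 1),
      Nonempty
        (cohomZero ((gdelta k G 0).restrict (fun f hf => h 0 f hf)
            : APsub k G 0 →ₗ[k] APsub k G 1) ≃ₗ[k]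
          cohomZero (dstarBar k G 0)) ∧
      ∀ n : ℕ,
        Nonempty
          (cohomSucc
              ((gdelta k G n).restrict (fun f hf => h n f hf)
                : APsub k G n →ₗ[k] APsub k G (n + 1))
              ((gdelta k G (n + 1)).restrict (fun f hf => h (n + 1) f hf)
                : APsub k G (n + 1) →ₗ[k] APsub k G (n + 2)) ≃ₗ[k]
            cohomSucc (dstarBar k G n) (dstarBar k G (n + 1))) :=
  ⟨fun _ _ => gdelta_mem_APsub,
    ⟨(cohomZeroEquivOfComm (restrict_gdelta_barEquivAP 0)).symm⟩,
    fun n => ⟨(cohomSuccEquivOfComm (restrict_gdelta_barEquivAP n)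
      (restrict_gdelta_barEquivAP (n + 1))).symm⟩⟩
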